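/- arXiv:1409.3769 — 2 statements merged into one kernel-verified Lean document; each statement's English description precedes it below -/
import Mathlib

section
/- Let L ⊆ A be a bracket-closed subspace, m ∈ ℕ, and let w_1, …, w_m ∈ L be homogeneous elements such that w_i² = 0 whenever p_{w_i w_i}² = 1 (1 ≤ i ≤ m). If for every r and all pairwise distinct indices i_1, …, i_r ∈ {1, …, m} the product w_{i_1} w_{i_2} ⋯ w_{i_r} lies in L + F·1, then for all exponents a_1, …, a_m ∈ ℕ₀ the product w_1^{a_1} w_2^{a_2} ⋯ w_m^{a_m} lies in L + F·1. -/
/-!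
Write `S = L + F·1`. For homogeneous `U, V ∈ L` of degrees `a, b` the brackets `[U,V]` and
`[V,U]` combine to `(1 - χ(a,b)χ(b,a))·UV ∈ L`, so `UV ∈ L` unless that symmetrised
pairing is `1`; and one bracket shows that `XY ∈ S` implies `YX ∈ S` for homogeneous
`X, Y ∈ S`. As `L` is spanned by homogeneous elements, a homogeneous element of `S` of
nonzero degree lies in `L`.

Induct on the total exponent. If all exponents are at most `1`, the product is one of the
assumed products of distinct `wᵢ`. Otherwise rotate a factor `wᵢ^e` with `e ≥ 2`, `wᵢ ∈ A_g`, to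
the end, writing the product as `v wᵢ wᵢ` with `v, v wᵢ ∈ S` by induction. If `χ(g,g)² = 1` then
`wᵢ² = 0`. Otherwise either `v wᵢ` lies in `L` and pairs nontrivially with `wᵢ`, or the
pairing `q` of `v` and `wᵢ` satisfies `q χ(g,g)² = 1`, so `q ≠ 1`, and the brackets of
`v wᵢ`, `wᵢ v` and `wᵢ²` with `wᵢ`, `wᵢ` and `v` give `(1 - q)·v wᵢ² ∈ L`.
-/

/-- An `F`-subspace `L` of a `G`-graded algebra `A` is *bracket-closed* (w.r.t. the
bicharacter `χ`) if it is spanned by its homogeneous elements and is closed under the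
braided bracket `[u,v] = vu − p_{vu}·uv` of homogeneous elements, where
`p_{uv} = χ (deg u) (deg v)`. -/
def IsBracketClosed {F A : Type*} (G : Type*) [Field F] [AddCommGroup G]
    [Ring A] [Algebra F A]
    (𝒜 : G → Submodule F A) (χ : G → G → Fˣ) (L : Submodule F A) : Prop :=
  L = Submodule.span F {a : A | a ∈ L ∧ ∃ g : G, a ∈ 𝒜 g} ∧
    ∀ (g h : G), ∀ u ∈ 𝒜 g, ∀ v ∈ 𝒜 h,
      u ∈ L → v ∈ L → v * u - (χ h g : F) • (u * v) ∈ L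

theorem Submodule.isHomogeneous_span {R M ι : Type*} [Semiring R] [AddCommMonoid M]
    [Module R M] [DecidableEq ι] {ℳ : ι → Submodule R M} [DirectSum.Decomposition ℳ]
    {s : Set M} (hs : ∀ x ∈ s, SetLike.IsHomogeneousElem ℳ x) :
    (span R s).IsHomogeneous ℳ := by
  intro i x hx
  induction hx using span_induction with
  | mem y hy =>
    obtain ⟨j, hj⟩ := hs y hy
    by_cases hji : j = i
    · subst hji
      rw [DirectSum.decompose_of_mem_same ℳ hj]
      exact subset_span hy
    · rw [DirectSum.decompose_of_mem_ne ℳ hj hji]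
      exact zero_mem _
  | zero => simp
  | add y z _ _ hy hz =>
    rw [DirectSum.decompose_add, DirectSum.add_apply, coe_add]
    exact add_mem hy hz
  | smul c y _ hy =>
    rw [DirectSum.decompose_smul, DirectSum.smul_apply, coe_smul]
    exact smul_mem _ c hy

theorem ne_zero_of_bichar_ne_one {F G : Type*} [Field F] [AddCommGroup G] {χ : G → G → Fˣ}
    (hχ1 : ∀ g h k : G, χ (g + h) k = χ g k * χ h k)
    (hχ2 : ∀ g h k : G, χ g (h + k) = χ g h * χ g k)
    {a b : G} (h : (χ a b : F) * χ b a ≠ 1) : b ≠ 0 := by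
  rintro rfl
  have h0l : χ 0 a = 1 := by simpa using hχ1 0 0 a
  have h0r : χ a 0 = 1 := by simpa using hχ2 a 0 0
  simp [h0l, h0r] at h

section Graded

variable {F G A : Type*} [Field F] [AddCommGroup G] [DecidableEq G] [Ring A] [Algebra F A]
  {𝒜 : G → Submodule F A} [GradedAlgebra 𝒜] {L : Submodule F A}

theorem Submodule.IsHomogeneous.mem_of_mem_sup_span_one (hL : L.IsHomogeneous 𝒜)
    {k : G} (hk : k ≠ 0) {x : A} (hx : x ∈ L ⊔ Submodule.span F {1}) (hxk : x ∈ 𝒜 k) :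
    x ∈ L := by
  obtain ⟨u, hu, _, hs, rfl⟩ := Submodule.mem_sup.mp hx
  obtain ⟨α, rfl⟩ := Submodule.mem_span_singleton.mp hs
  rw [← DirectSum.decompose_of_mem_same 𝒜 hxk, DirectSum.decompose_add, DirectSum.add_apply,
    Submodule.coe_add, DirectSum.decompose_smul, DirectSum.smul_apply, Submodule.coe_smul,
    DirectSum.decompose_of_mem_ne 𝒜 SetLike.GradedOne.one_mem (Ne.symm hk), smul_zero,
    add_zero]
  exact hL k hu

theorem Submodule.IsHomogeneous.exists_eq_add_smul_one (hL : L.IsHomogeneous 𝒜)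
    {k : G} {x : A} (hx : x ∈ L ⊔ Submodule.span F {1}) (hxk : x ∈ 𝒜 k) :
    ∃ u ∈ L, u ∈ 𝒜 k ∧ ∃ α : F, x = u + α • 1 := by
  by_cases hk : k = 0
  · subst hk
    obtain ⟨u, hu, _, hs, rfl⟩ := Submodule.mem_sup.mp hx
    obtain ⟨α, rfl⟩ := Submodule.mem_span_singleton.mp hs
    refine ⟨u, hu, ?_, α, rfl⟩
    simpa using Submodule.sub_mem _ hxk (Submodule.smul_mem _ α SetLike.GradedOne.one_mem)
  · exact ⟨x, hL.mem_of_mem_sup_span_one hk hx hxk, hxk, 0, by simp⟩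

end Graded

section PowProd

variable {ι A : Type*}

def powProd [Monoid A] (w : ι → A) (l : List (ι × ℕ)) : A :=
  (l.map fun p ↦ w p.1 ^ p.2).prod

variable [Monoid A] (w : ι → A)

@[simp]
theorem powProd_append (u v : List (ι × ℕ)) :
    powProd w (u ++ v) = powProd w u * powProd w v := by
  simp [powProd]

@[simp]
theorem powProd_singleton (p : ι × ℕ) : powProd w [p] = w p.1 ^ p.2 := by
  simp [powProd]

theorem powProd_eq_one {l : List (ι × ℕ)} (h : (l.map Prod.snd).sum = 0) : powProd w l = 1 := by
  rw [List.sum_eq_zero_iff] at h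
  refine List.prod_eq_one fun x hx ↦ ?_
  obtain ⟨p, hp, rfl⟩ := List.mem_map.mp hx
  rw [h p.2 (List.mem_map_of_mem hp), pow_zero]

theorem powProd_eq_prod_of_le_one {l : List (ι × ℕ)} (h : ∀ p ∈ l, p.2 ≤ 1) :
    powProd w l = (((l.filter fun p ↦ p.2 = 1).map Prod.fst).map w).prod := by
  induction l with
  | nil => rfl
  | cons p l ih =>
    rw [← List.singleton_append, powProd_append, ih fun q hq ↦ h q (List.mem_cons_of_mem p hq)]
    rcases Nat.le_one_iff_eq_zero_or_eq_one.mp (h p List.mem_cons_self) with hp | hp <;>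
      simp [hp]

theorem powProd_mem_graded {G S : Type*} [AddMonoid G] [SetLike S A]
    {𝒜 : G → S} [SetLike.GradedMonoid 𝒜] {d : ι → G} (hw : ∀ i, w i ∈ 𝒜 (d i))
    (l : List (ι × ℕ)) : powProd w l ∈ 𝒜 (l.map fun p ↦ p.2 • d p.1).sum :=
  SetLike.list_prod_map_mem_graded l _ _ fun p _ ↦ SetLike.pow_mem_graded p.2 (hw p.1)

end PowProd

namespace IsBracketClosed

variable {F G A : Type*} [Field F] [AddCommGroup G] [Ring A] [Algebra F A]
  {𝒜 : G → Submodule F A} {χ : G → G → Fˣ} {L : Submodule F A}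

theorem mul_mem_of_ne_one (hL : IsBracketClosed G 𝒜 χ L) {a b : G} {U V : A}
    (hU : U ∈ 𝒜 a) (hV : V ∈ 𝒜 b) (hUL : U ∈ L) (hVL : V ∈ L)
    (hne : (χ a b : F) * χ b a ≠ 1) : U * V ∈ L := by
  refine (Submodule.smul_mem_iff L (sub_ne_zero.mpr hne.symm)).mp ?_
  convert L.add_mem (hL.2 b a V hV U hU hVL hUL)
    (L.smul_mem (χ a b : F) (hL.2 a b U hU V hV hUL hVL)) using 1
  module

theorem mul_mul_self_mem [SetLike.GradedMul 𝒜]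
    (hχ1 : ∀ g h k : G, χ (g + h) k = χ g k * χ h k)
    (hχ2 : ∀ g h k : G, χ g (h + k) = χ g h * χ g k) (hL : IsBracketClosed G 𝒜 χ L)
    {a b : G} {U V : A} (hU : U ∈ 𝒜 a) (hV : V ∈ 𝒜 b) (hUL : U ∈ L) (hVL : V ∈ L)
    (hVV : V * V ∈ L) (hne : (χ a b : F) * χ b a ≠ 1) : U * (V * V) ∈ L := by
  have hUV := hL.mul_mem_of_ne_one hU hV hUL hVL hne
  have hVU := hL.mul_mem_of_ne_one hV hU hVL hUL (by rwa [mul_comm])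
  have h₁ := hL.2 (a + b) b (U * V) (SetLike.mul_mem_graded hU hV) V hV hUV hVL
  have h₂ := hL.2 b (b + a) V hV (V * U) (SetLike.mul_mem_graded hV hU) hVL hVU
  have h₃ := hL.2 (b + b) a (V * V) (SetLike.mul_mem_graded hV hV) U hU hVV hUL
  -- eliminating `V * V * U` and `V * U * V` leaves a nonzero multiple of `U * (V * V)`
  have hcoef : (χ (b + a) b : F) - χ a (b + b) * χ b (a + b) =
      χ b b * χ a b * (1 - χ a b * χ b a) := by
    rw [hχ1, hχ2, hχ2]
    push_cast
    ring
  have hc : (χ b b : F) * χ a b * (1 - χ a b * χ b a) ≠ 0 :=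
    mul_ne_zero (mul_ne_zero (Units.ne_zero _) (Units.ne_zero _)) (sub_ne_zero.mpr hne.symm)
  refine (Submodule.smul_mem_iff L hc).mp ?_
  convert L.sub_mem (L.smul_mem (χ (b + a) b : F) h₃)
    (L.smul_mem (χ a (b + b) : F) (L.sub_mem h₂ h₁)) using 1
  rw [← hcoef]
  simp only [mul_assoc]
  module

variable [DecidableEq G] [GradedAlgebra 𝒜] {ι : Type*} {d : ι → G} {w : ι → A}

theorem isHomogeneous (hL : IsBracketClosed G 𝒜 χ L) :
    L.IsHomogeneous 𝒜 := by
  rw [hL.1]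
  exact Submodule.isHomogeneous_span fun x hx ↦ hx.2

theorem mul_comm_mem_sup (hL : IsBracketClosed G 𝒜 χ L)
    {a b : G} {X Y : A} (hX : X ∈ 𝒜 a) (hY : Y ∈ 𝒜 b)
    (hXS : X ∈ L ⊔ Submodule.span F {1}) (hYS : Y ∈ L ⊔ Submodule.span F {1})
    (hXY : X * Y ∈ L ⊔ Submodule.span F {1}) : Y * X ∈ L ⊔ Submodule.span F {1} := by
  obtain ⟨U, hUL, hU, α, rfl⟩ := hL.isHomogeneous.exists_eq_add_smul_one hXS hX
  obtain ⟨V, hVL, hV, β, rfl⟩ := hL.isHomogeneous.exists_eq_add_smul_one hYS hY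
  have hrest : β • U + α • V + (β * α) • (1 : A) ∈ L ⊔ Submodule.span F {1} :=
    add_mem (add_mem (Submodule.smul_mem _ β (Submodule.mem_sup_left hUL))
      (Submodule.smul_mem _ α (Submodule.mem_sup_left hVL)))
      (Submodule.smul_mem _ _ (Submodule.mem_sup_right (Submodule.mem_span_singleton_self 1)))
  have hUV : U * V ∈ L ⊔ Submodule.span F {1} := by
    convert sub_mem hXY hrest using 1
    simp only [mul_add, add_mul, smul_mul_assoc, mul_smul_comm, one_mul, mul_one]
    module
  have hVU : V * U ∈ L ⊔ Submodule.span F {1} := by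
    convert add_mem (Submodule.mem_sup_left (hL.2 a b U hU V hV hUL hVL))
      (Submodule.smul_mem _ (χ b a : F) hUV) using 1
    module
  convert add_mem hVU hrest using 1
  simp only [mul_add, add_mul, smul_mul_assoc, mul_smul_comm, one_mul, mul_one]
  module

theorem mul_mul_mem_sup (hχ1 : ∀ g h k : G, χ (g + h) k = χ g k * χ h k)
    (hχ2 : ∀ g h k : G, χ g (h + k) = χ g h * χ g k) (hL : IsBracketClosed G 𝒜 χ L)
    {g k : G} {y v : A} (hy : y ∈ 𝒜 g) (hyL : y ∈ L)
    (hsq : (χ g g : F) ^ 2 = 1 → y * y = 0)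
    (hv : v ∈ 𝒜 k) (hvS : v ∈ L ⊔ Submodule.span F {1})
    (hvyS : v * y ∈ L ⊔ Submodule.span F {1}) : v * y * y ∈ L ⊔ Submodule.span F {1} := by
  by_cases hgg : (χ g g : F) ^ 2 = 1
  · rw [mul_assoc, hsq hgg, mul_zero]
    exact zero_mem _
  refine Submodule.mem_sup_left ?_
  have hvy := SetLike.mul_mem_graded hv hy
  by_cases hq : (χ g (k + g) : F) * χ (k + g) g = 1
  · have hne : (χ g k : F) * χ k g ≠ 1 := by
      intro h
      rw [hχ2, hχ1] at hq
      push_cast at hq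
      exact hgg (by linear_combination hq - (χ g g : F) ^ 2 * h)
    have hvL := hL.isHomogeneous.mem_of_mem_sup_span_one
      (ne_zero_of_bichar_ne_one hχ1 hχ2 hne) hvS hv
    have hyy := hL.mul_mem_of_ne_one hy hy hyL hyL (by rwa [← sq])
    rw [mul_assoc]
    exact hL.mul_mul_self_mem hχ1 hχ2 hv hy hvL hyL hyy (by rwa [mul_comm])
  · have hvyL := hL.isHomogeneous.mem_of_mem_sup_span_one
      (ne_zero_of_bichar_ne_one hχ1 hχ2 hq) hvyS hvy
    exact hL.mul_mem_of_ne_one hvy hy hvyL hyL (by rwa [mul_comm])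

theorem powProd_append_comm_mem_sup (hL : IsBracketClosed G 𝒜 χ L)
    (hw : ∀ i, w i ∈ 𝒜 (d i)) {n : ℕ}
    (ih : ∀ l : List (ι × ℕ), (l.map Prod.fst).Nodup → (l.map Prod.snd).sum < n →
      powProd w l ∈ L ⊔ Submodule.span F {1})
    {u v : List (ι × ℕ)} (hnd : ((u ++ v).map Prod.fst).Nodup)
    (hn : ((u ++ v).map Prod.snd).sum = n)
    (huv : powProd w (u ++ v) ∈ L ⊔ Submodule.span F {1}) :
    powProd w (v ++ u) ∈ L ⊔ Submodule.span F {1} := by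
  rw [powProd_append] at huv ⊢
  rw [List.map_append] at hnd hn
  rw [List.sum_append] at hn
  by_cases h0 : (u.map Prod.snd).sum = 0 ∨ (v.map Prod.snd).sum = 0
  · have hcomm : Commute (powProd w u) (powProd w v) := by
      rcases h0 with h0 | h0 <;> simp [powProd_eq_one w h0]
    rwa [← hcomm.eq]
  · push Not at h0
    exact hL.mul_comm_mem_sup (powProd_mem_graded w hw u) (powProd_mem_graded w hw v)
      (ih u hnd.of_append_left (by omega)) (ih v hnd.of_append_right (by omega)) huv

theorem powProd_mem_sup (hχ1 : ∀ g h k : G, χ (g + h) k = χ g k * χ h k)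
    (hχ2 : ∀ g h k : G, χ g (h + k) = χ g h * χ g k) (hL : IsBracketClosed G 𝒜 χ L)
    (hw : ∀ i, w i ∈ 𝒜 (d i)) (hwL : ∀ i, w i ∈ L)
    (hsq : ∀ i, (χ (d i) (d i) : F) ^ 2 = 1 → w i * w i = 0)
    (hprod : ∀ t : List ι, t.Nodup → (t.map w).prod ∈ L ⊔ Submodule.span F {1})
    (l : List (ι × ℕ)) (hl : (l.map Prod.fst).Nodup) :
    powProd w l ∈ L ⊔ Submodule.span F {1} := by
  induction hn : (l.map Prod.snd).sum using Nat.strong_induction_on generalizing l with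
  | _ n ih =>
  replace ih : ∀ l : List (ι × ℕ), (l.map Prod.fst).Nodup → (l.map Prod.snd).sum < n →
      powProd w l ∈ L ⊔ Submodule.span F {1} := fun l hl hlt ↦ ih _ hlt l hl rfl
  by_cases hsmall : ∀ p ∈ l, p.2 ≤ 1
  · rw [powProd_eq_prod_of_le_one w hsmall]
    exact hprod _ (hl.sublist (List.filter_sublist.map Prod.fst))
  push Not at hsmall
  obtain ⟨⟨i, e⟩, hx, he⟩ := hsmall
  obtain ⟨l₁, l₂, rfl⟩ := List.append_of_mem hx
  have hperm : (l₁ ++ [(i, e)] ++ l₂).Perm (l₂ ++ l₁ ++ [(i, e)]) := by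
    simpa using List.perm_append_comm (l₁ := l₁ ++ [(i, e)]) (l₂ := l₂)
  have hl' := (hperm.map Prod.fst).nodup_iff.mp (by simpa using hl)
  have hn' := (hperm.map Prod.snd).sum_eq.symm.trans (by simpa using hn)
  have hlower : ∀ e' < e, powProd w (l₂ ++ l₁ ++ [(i, e')]) ∈ L ⊔ Submodule.span F {1} :=
    fun e' he' ↦ ih _ (by simpa using hl') (by simp at hn' ⊢; omega)
  have hsplit : ∀ e', powProd w (l₂ ++ l₁ ++ [(i, e' + 1)]) =
      powProd w (l₂ ++ l₁ ++ [(i, e')]) * w i := by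
    intro e'
    simp [pow_succ, mul_assoc]
  obtain ⟨e, rfl⟩ : ∃ e', e = e' + 2 := ⟨e - 2, by omega⟩
  have hlast := hL.mul_mul_mem_sup hχ1 hχ2 (hw i) (hwL i) (hsq i)
    (powProd_mem_graded w hw _) (hlower e (by omega)) (hsplit e ▸ hlower (e + 1) (by omega))
  rw [← hsplit, ← hsplit] at hlast
  simpa using hL.powProd_append_comm_mem_sup hw ih (u := l₂) (v := l₁ ++ [(i, e + 2)])
    (by simpa using hl') (by simpa using hn') (by simpa using hlast)

end IsBracketClosed

theorem stmt_11_general (F : Type*) [Field F]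
    (G : Type*) [AddCommGroup G] [DecidableEq G]
    (A : Type*) [Ring A] [Algebra F A]
    (𝒜 : G → Submodule F A) [GradedAlgebra 𝒜]
    (χ : G → G → Fˣ)
    (hχ1 : ∀ g h k : G, χ (g + h) k = χ g k * χ h k)
    (hχ2 : ∀ g h k : G, χ g (h + k) = χ g h * χ g k)
    (L : Submodule F A) (hL : IsBracketClosed G 𝒜 χ L)
    (m : ℕ)
    (d : Fin m → G) (w : Fin m → A)
    (hhom : ∀ i, w i ∈ 𝒜 (d i)) (hwL : ∀ i, w i ∈ L)
    (hsq : ∀ i, ((χ (d i) (d i) : F)) ^ 2 = 1 → w i * w i = 0)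
    (hprod : ∀ (r : ℕ) (f : Fin r → Fin m), Function.Injective f →
      (List.ofFn fun j => w (f j)).prod ∈ L ⊔ Submodule.span F {(1 : A)})
    (a : Fin m → ℕ) :
    (List.ofFn fun i => w i ^ a i).prod ∈ L ⊔ Submodule.span F {(1 : A)} := by
  have hprod' (t : List (Fin m)) (ht : t.Nodup) :
      (t.map w).prod ∈ L ⊔ Submodule.span F {(1 : A)} := by
    simpa using hprod t.length t.get (List.nodup_iff_injective_get.mp ht)
  have hpow := hL.powProd_mem_sup hχ1 hχ2 hhom hwL hsq hprod' (List.ofFn fun i ↦ (i, a i))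
    (by rw [List.map_ofFn]; exact List.nodup_ofFn.mpr fun i j h ↦ h)
  simpa [powProd, List.map_ofFn, Function.comp_def] using hpow

theorem stmt_11 (F : Type*) [Field F] [CharZero F]
    (G : Type*) [AddCommGroup G] [DecidableEq G]
    (A : Type*) [Ring A] [Algebra F A]
    (𝒜 : G → Submodule F A) [GradedAlgebra 𝒜]
    (χ : G → G → Fˣ)
    (hχ1 : ∀ g h k : G, χ (g + h) k = χ g k * χ h k)
    (hχ2 : ∀ g h k : G, χ g (h + k) = χ g h * χ g k)
    (L : Submodule F A) (hL : IsBracketClosed G 𝒜 χ L)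
    (m : ℕ) (hm : 0 < m)
    (d : Fin m → G) (w : Fin m → A)
    (hhom : ∀ i, w i ∈ 𝒜 (d i)) (hwL : ∀ i, w i ∈ L)
    (hsq : ∀ i, ((χ (d i) (d i) : F)) ^ 2 = 1 → w i * w i = 0)
    (hprod : ∀ (r : ℕ) (f : Fin r → Fin m), Function.Injective f →
      (List.ofFn fun j => w (f j)).prod ∈ L ⊔ Submodule.span F {(1 : A)})
    (a : Fin m → ℕ) :
    (List.ofFn fun i => w i ^ a i).prod ∈ L ⊔ Submodule.span F {(1 : A)} :=
  stmt_11_general F G A 𝒜 χ hχ1 hχ2 L hL m d w hhom hwL hsq hprod a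
end

section
/- The Nichols braided Lie algebra 𝔏(V) of the quantum linear space equals the linear span of the nonzero pure powers of the generators: 𝔏(V) = span_F{ x_i^{a} : 1 ≤ i ≤ n, 1 ≤ a ≤ N_i − 1 }. -/
/-!
The span `S` of the pure powers is bracket-closed: a homogeneous element of `S` is a
combination of pure powers of its own degree, the bracket of `x j ^ m` and `x i ^ k` vanishes
for `i ≠ j` by the `q`-commutation relations, and for `i = j` it is a multiple of
`x i ^ (k + m)`, which is again a pure power or zero. Hence `𝔏(V) ≤ S` by minimality.
Conversely `[x i ^ m, x i] = (1 - q i i ^ m) • x i ^ (m + 1)` with `q i i ^ m ≠ 1` for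
`0 < m < N i`, so every pure power lies in `𝔏(V)`.
-/

open Submodule

theorem map_nsmul_of_map_add {G M : Type*} [AddMonoid G] [Group M] {f : G → M}
    (hf : ∀ a b, f (a + b) = f a * f b) (k : ℕ) (a : G) : f (k • a) = f a ^ k :=
  map_nsmul (AddMonoidHom.mk' (fun a => Additive.ofMul (f a)) hf) k a

theorem pow_mul_pow_eq_smul_of_mul_eq_smul {R A : Type*} [CommSemiring R] [Semiring A]
    [Algebra R A] {a b : A} {c : R} (h : a * b = c • (b * a)) (k m : ℕ) :
    a ^ k * b ^ m = c ^ (k * m) • (b ^ m * a ^ k) := by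
  have hb : ∀ m : ℕ, a * b ^ m = c ^ m • (b ^ m * a) := by
    intro m
    induction m with
    | zero => simp
    | succ m ih =>
      rw [pow_succ, ← mul_assoc, ih, smul_mul_assoc, mul_assoc, h, mul_smul_comm, smul_smul,
        ← pow_succ, ← mul_assoc]
  induction k with
  | zero => simp
  | succ k ih =>
    rw [pow_succ, mul_assoc, hb, mul_smul_comm, ← mul_assoc, ih, smul_mul_assoc, smul_smul,
      mul_assoc, ← pow_add, ← pow_succ, add_mul, one_mul, add_comm m]

theorem mem_span_image_degree_eq_of_mem_span_image {ι R M β : Type*} [DecidableEq ι]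
    [Semiring R] [AddCommMonoid M] [Module R M] (ℳ : ι → Submodule R M)
    [DirectSum.Decomposition ℳ] {v : β → M} {d : β → ι} (hv : ∀ b, v b ∈ ℳ (d b))
    {s : Set β} {u : M} {i : ι} (hu : u ∈ span R (v '' s)) (hui : u ∈ ℳ i) :
    u ∈ span R (v '' {b ∈ s | d b = i}) := by
  let π : M →ₗ[R] M := (ℳ i).subtype ∘ₗ DirectSum.component R ι (fun j => ℳ j) i ∘ₗ
    (DirectSum.decomposeLinearEquiv ℳ).toLinearMap
  have hπ : ∀ {m : M} {j : ι}, m ∈ ℳ j → π m = if j = i then m else 0 := by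
    intro m j hm
    split_ifs with hji
    · subst hji
      exact DirectSum.decompose_of_mem_same ℳ hm
    · exact DirectSum.decompose_of_mem_ne ℳ hm hji
  have hmap : (span R (v '' s)).map π ≤ span R (v '' {b ∈ s | d b = i}) := by
    rw [map_span, span_le]
    rintro _ ⟨_, ⟨b, hb, rfl⟩, rfl⟩
    rw [SetLike.mem_coe, hπ (hv b)]
    split_ifs with hbi
    · exact subset_span ⟨b, ⟨hb, hbi⟩, rfl⟩
    · exact zero_mem _
  simpa [hπ hui] using hmap (mem_map_of_mem hu)

section BraidedBracket

variable {R A : Type*} [CommSemiring R] [Ring A] [Algebra R A]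

def braidedBracket (c : R) : A →ₗ[R] A →ₗ[R] A :=
  (LinearMap.mul R A).flip - c • LinearMap.mul R A

theorem braidedBracket_apply (c : R) (u v : A) :
    braidedBracket c u v = v * u - c • (u * v) := rfl

end BraidedBracket

def purePowers {ι A : Type*} [Monoid A] (x : ι → A) (N : ι → ℕ) : Set A :=
  (fun p : ι × ℕ => x p.1 ^ p.2) '' {p | 1 ≤ p.2 ∧ p.2 ≤ N p.1 - 1}

section QuantumLinearSpace

variable {F A G ι : Type*} [Field F] [Ring A] [Algebra F A] [AddCommGroup G]
  {χ : G → G → Fˣ} {x : ι → A} {N : ι → ℕ} {d : ι → G}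

theorem braidedBracket_pow_mem_span_purePowers
    (hχ1 : ∀ g h k, χ (g + h) k = χ g k * χ h k) (hχ2 : ∀ g h k, χ g (h + k) = χ g h * χ g k)
    (hrel : ∀ i j, i ≠ j → x i * x j = (χ (d i) (d j) : F) • (x j * x i))
    (hnil : ∀ i, x i ^ N i = 0) {i j : ι} {k m : ℕ} (hk : 0 < k) :
    braidedBracket (χ (m • d j) (k • d i) : F) (x i ^ k) (x j ^ m) ∈
      span F (purePowers x N) := by
  rw [braidedBracket_apply]
  by_cases hij : i = j
  · subst hij
    rw [← pow_add, ← pow_add, add_comm m]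
    have hmem : x i ^ (k + m) ∈ span F (purePowers x N) := by
      by_cases hkm : k + m ≤ N i - 1
      · exact subset_span ⟨(i, k + m), ⟨by omega, hkm⟩, rfl⟩
      · rw [show k + m = N i + (k + m - N i) by omega, pow_add, hnil, zero_mul]
        exact zero_mem _
    exact sub_mem hmem (smul_mem _ _ hmem)
  · have hχ : (χ (m • d j) (k • d i) : F) = (χ (d j) (d i) : F) ^ (k * m) := by
      rw [map_nsmul_of_map_add (f := (χ · (k • d i))) (fun g h => hχ1 g h _),
        map_nsmul_of_map_add (hχ2 _), ← pow_mul, Units.val_pow_eq_pow_val]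
    rw [hχ, mul_comm k, ← pow_mul_pow_eq_smul_of_mul_eq_smul (hrel j i (Ne.symm hij)), sub_self]
    exact zero_mem _

theorem isBracketClosed_span_purePowers [DecidableEq G] (𝒜 : G → Submodule F A)
    [GradedAlgebra 𝒜] (hχ1 : ∀ g h k, χ (g + h) k = χ g k * χ h k)
    (hχ2 : ∀ g h k, χ g (h + k) = χ g h * χ g k) (hxd : ∀ i, x i ∈ 𝒜 (d i))
    (hrel : ∀ i j, i ≠ j → x i * x j = (χ (d i) (d j) : F) • (x j * x i))
    (hnil : ∀ i, x i ^ N i = 0) :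
    IsBracketClosed G 𝒜 χ (span F (purePowers x N)) := by
  have hdeg : ∀ p : ι × ℕ, x p.1 ^ p.2 ∈ 𝒜 (p.2 • d p.1) := fun p =>
    SetLike.pow_mem_graded _ (hxd p.1)
  refine ⟨le_antisymm (span_le.2 ?_) (span_le.2 fun _ ha => ha.1), ?_⟩
  · rintro _ ⟨p, hp, rfl⟩
    exact subset_span ⟨subset_span ⟨p, hp, rfl⟩, _, hdeg p⟩
  intro g h u hu v hv huS hvS
  have hbr := apply_mem_map₂ (braidedBracket (χ h g : F))
    (mem_span_image_degree_eq_of_mem_span_image 𝒜 hdeg huS hu)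
    (mem_span_image_degree_eq_of_mem_span_image 𝒜 hdeg hvS hv)
  rw [map₂_span_span] at hbr
  refine span_le.2 ?_ hbr
  rintro _ ⟨_, ⟨⟨i, k⟩, ⟨⟨hk, -⟩, rfl⟩, rfl⟩, _, ⟨⟨j, m⟩, ⟨-, rfl⟩, rfl⟩, rfl⟩
  exact braidedBracket_pow_mem_span_purePowers hχ1 hχ2 hrel hnil hk

theorem pow_mem_of_isBracketClosed (𝒜 : G → Submodule F A) [SetLike.GradedMonoid 𝒜]
    (hχ2 : ∀ g h k, χ g (h + k) = χ g h * χ g k) {L : Submodule F A}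
    (hL : IsBracketClosed G 𝒜 χ L) {y : A} {e : G} (hy : y ∈ 𝒜 e) (hyL : y ∈ L) {n : ℕ}
    (hprim : IsPrimitiveRoot (χ e e : F) n) {k : ℕ} (hk : 0 < k) (hkn : k ≤ n) :
    y ^ k ∈ L := by
  induction k, hk using Nat.le_induction with
  | base => simpa using hyL
  | succ m hm ih =>
    have hbr := hL.2 _ _ _ (SetLike.pow_mem_graded m hy) _ hy (ih (by omega)) hyL
    rw [map_nsmul_of_map_add (hχ2 _), Units.val_pow_eq_pow_val, ← pow_succ', ← pow_succ] at hbr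
    have hζ : (χ e e : F) ^ m ≠ 1 := hprim.pow_ne_one_of_pos_of_lt (by omega) (by omega)
    refine (smul_mem_iff L (sub_ne_zero.2 hζ.symm)).1 ?_
    rwa [sub_smul, one_smul]

end QuantumLinearSpace

theorem stmt_14_general (F : Type*) [Field F]
    (n : ℕ)
    (N : Fin n → ℕ) (hN : ∀ i, 2 ≤ N i)
    (q : Fin n → Fin n → Fˣ)
    (hprim : ∀ i, IsPrimitiveRoot (q i i : F) (N i))
    (A : Type*) [Ring A] [Algebra F A]
    (x : Fin n → A)
    (hrel : ∀ i j, i ≠ j → x i * x j = (q i j : F) • (x j * x i))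
    (hnil : ∀ i, x i ^ N i = 0)
    (𝒜 : (Fin n → ℤ) → Submodule F A) [GradedAlgebra 𝒜]
    (hxdeg : ∀ i, x i ∈ 𝒜 (Pi.single i 1))
    (χ : (Fin n → ℤ) → (Fin n → ℤ) → Fˣ)
    (hχ1 : ∀ g h k : Fin n → ℤ, χ (g + h) k = χ g k * χ h k)
    (hχ2 : ∀ g h k : Fin n → ℤ, χ g (h + k) = χ g h * χ g k)
    (hχq : ∀ i j, χ (Pi.single i 1) (Pi.single j 1) = q i j)
    (L : Submodule F A)
    (hL : IsBracketClosed (Fin n → ℤ) 𝒜 χ L)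
    (hxL : ∀ i, x i ∈ L)
    (hmin : ∀ L' : Submodule F A, IsBracketClosed (Fin n → ℤ) 𝒜 χ L' →
      (∀ i, x i ∈ L') → L ≤ L') :
    L = Submodule.span F
      {a : A | ∃ i : Fin n, ∃ k : ℕ, 1 ≤ k ∧ k ≤ N i - 1 ∧ a = x i ^ k} := by
  have hT : {a : A | ∃ i : Fin n, ∃ k : ℕ, 1 ≤ k ∧ k ≤ N i - 1 ∧ a = x i ^ k} =
      purePowers x N := by
    ext a
    simp [purePowers, eq_comm, and_assoc]
  have hclosed : IsBracketClosed (Fin n → ℤ) 𝒜 χ (span F (purePowers x N)) :=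
    isBracketClosed_span_purePowers 𝒜 hχ1 hχ2 hxdeg (by simpa only [hχq] using hrel) hnil
  rw [hT]
  refine le_antisymm (hmin _ hclosed fun i => subset_span ⟨(i, 1), ⟨le_rfl, ?_⟩, pow_one _⟩)
    (span_le.2 ?_)
  · exact Nat.le_sub_one_of_lt (hN i)
  · rintro _ ⟨⟨i, k⟩, ⟨hk, hkN⟩, rfl⟩
    exact pow_mem_of_isBracketClosed 𝒜 hχ2 hL (hxdeg i) (hxL i)
      (by simpa only [hχq] using hprim i) hk (hkN.trans (Nat.sub_le _ _))

/-- For a quantum linear space, the Nichols braided Lie algebra `𝔏(V)` (the smallest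
bracket-closed subspace of the Nichols algebra containing the generators) is exactly the
span of the nonzero pure powers `x_i^a`, `1 ≤ a ≤ N_i − 1`, of the generators. -/
theorem stmt_14 (F : Type*) [Field F] [CharZero F]
    (n : ℕ) (hn : 1 ≤ n)
    (N : Fin n → ℕ) (hN : ∀ i, 2 ≤ N i)
    (q : Fin n → Fin n → Fˣ)
    (hqinv : ∀ i j, i ≠ j → q i j * q j i = 1)
    (hprim : ∀ i, IsPrimitiveRoot (q i i : F) (N i))
    (A : Type*) [Ring A] [Algebra F A]
    (x : Fin n → A)
    (hrel : ∀ i j, i ≠ j → x i * x j = (q i j : F) • (x j * x i))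
    (hnil : ∀ i, x i ^ N i = 0)
    (hindep : LinearIndependent F (fun a : (∀ i, Fin (N i)) =>
        (List.ofFn fun i => x i ^ ((a i : ℕ))).prod))
    (hspan : Submodule.span F (Set.range (fun a : (∀ i, Fin (N i)) =>
        (List.ofFn fun i => x i ^ ((a i : ℕ))).prod)) = ⊤)
    (𝒜 : (Fin n → ℤ) → Submodule F A) [GradedAlgebra 𝒜]
    (hxdeg : ∀ i, x i ∈ 𝒜 (Pi.single i 1))
    (χ : (Fin n → ℤ) → (Fin n → ℤ) → Fˣ)
    (hχ1 : ∀ g h k : Fin n → ℤ, χ (g + h) k = χ g k * χ h k)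
    (hχ2 : ∀ g h k : Fin n → ℤ, χ g (h + k) = χ g h * χ g k)
    (hχq : ∀ i j, χ (Pi.single i 1) (Pi.single j 1) = q i j)
    (L : Submodule F A)
    (hL : IsBracketClosed (Fin n → ℤ) 𝒜 χ L)
    (hxL : ∀ i, x i ∈ L)
    (hmin : ∀ L' : Submodule F A, IsBracketClosed (Fin n → ℤ) 𝒜 χ L' →
      (∀ i, x i ∈ L') → L ≤ L') :
    L = Submodule.span F
      {a : A | ∃ i : Fin n, ∃ k : ℕ, 1 ≤ k ∧ k ≤ N i - 1 ∧ a = x i ^ k} :=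
  stmt_14_general F n N hN q hprim A x hrel hnil 𝒜 hxdeg χ hχ1 hχ2 hχq L hL hxL hmin
end
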